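/- The element of minimum norm of the set cl(dom f − dom g) ∩ cl(dom f* + dom g*) equals v_P + v_D; that is, P_{cl(dom f − dom g) ∩ cl(dom f* + dom g*)}(0) = v_P + v_D. (By a known characterization, this element of minimum norm equals the minimal displacement vector v of the Douglas–Rachford operator for f and g; hence v = v_P + v_D.) -/

import Mathlib

open scoped InnerProductSpace Pointwise Classical
open Filter Topology

noncomputable section

variable {H : Type*} [NormedAddCommGroup H] [InnerProductSpace ℝ H]

/-- The effective domain of an extended-real-valued function. -/
def fdom {α : Type*} (f : α → EReal) : Set α := {x | f x ≠ ⊤}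

/-- The Fenchel conjugate `f*(u) = sup_x (⟪x, u⟫ - f x)`. -/
def fconj (f : H → EReal) : H → EReal :=
  fun u => ⨆ x : H, ((⟪x, u⟫_ℝ : ℝ) : EReal) - f x

/-- The recession function `(rec f)(y) = sup_{x ∈ dom f} (f (x + y) - f x)`. -/
def recFn (f : H → EReal) : H → EReal :=
  fun y => ⨆ x ∈ fdom f, (f (x + y) - f x)

/-- A proper function: never `-∞` and not identically `+∞`. -/
def ProperFn {α : Type*} (f : α → EReal) : Prop := (∀ x, f x ≠ ⊥) ∧ ∃ x, f x ≠ ⊤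

/-- Convexity of an extended-real-valued function, via convexity of its epigraph. -/
def ConvexFn (f : H → EReal) : Prop :=
  Convex ℝ {p : H × ℝ | f p.1 ≤ (p.2 : EReal)}

/-- `v` is the element of minimum norm of `S`, i.e. `v = P_S 0`, the metric
projection of `0` onto `S`. -/
def IsMinNormPoint (S : Set H) (v : H) : Prop := v ∈ S ∧ ∀ w ∈ S, ‖v‖ ≤ ‖w‖

/-- `p` is the metric projection of `x` onto `S`, i.e. `p = P_S x`. -/
def IsProjOn (S : Set H) (x p : H) : Prop := p ∈ S ∧ ∀ w ∈ S, dist x p ≤ dist x w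

/-- The polar cone `S° = {u | ∀ x ∈ S, ⟪x, u⟫ ≤ 0}`. -/
def polarCone (s : Set H) : Set H := {u | ∀ x ∈ s, ⟪x, u⟫_ℝ ≤ 0}

/-- The recession cone `rec S = {x | ∀ y ∈ S, x + y ∈ S}`. -/
def recCone (s : Set H) : Set H := {x | ∀ y ∈ s, x + y ∈ s}

/-- `p = prox_f w`: `p` minimizes `y ↦ f y + ½‖y - w‖²`. -/
def IsProxOf (f : H → EReal) (w p : H) : Prop :=
  ∀ y : H, f p + ((1 / 2 * ‖p - w‖ ^ 2 : ℝ) : EReal) ≤ f y + ((1 / 2 * ‖y - w‖ ^ 2 : ℝ) : EReal)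

/-!
Write `C = cl (dom f - dom g)` and `D = cl (dom f* + dom g*)`. If `⟪·, u⟫` is bounded above on
`dom f`, then `f* (z + u) ≤ f* z + sup ⟪dom f, u⟫`, so `u` is a recession direction of `dom f*`;
by Fenchel–Moreau (`f** = f`) the same holds with `f` and `f*` exchanged. Hence every `u` in
the barrier cone of `C` is, together with `-u`, a recession direction of `D`, which forces
`⟪u, vD⟫ = 0`. For a closed convex set the polar of the barrier cone lies in the recession
cone, so `C + vD ⊆ C`; symmetrically `D + vP ⊆ D`. Moreover `-vP` is in the barrier cone of
`C`, so `vP ⊥ vD`. Thus `vP + vD ∈ C ∩ D` and for `w ∈ C ∩ D`,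
`‖vP + vD‖² = ‖vP‖² + ‖vD‖² ≤ ⟪w, vP⟫ + ⟪w, vD⟫ ≤ ‖w‖ ‖vP + vD‖`.
-/

def barrierCone (s : Set H) : Set H := {u | BddAbove ((⟪·, u⟫_ℝ) '' s)}

lemma mem_barrierCone_iff {s : Set H} {u : H} :
    u ∈ barrierCone s ↔ ∃ M, ∀ x ∈ s, ⟪x, u⟫_ℝ ≤ M := by
  show BddAbove _ ↔ _
  simp only [bddAbove_def, Set.forall_mem_image]

lemma barrierCone_anti {s t : Set H} (h : s ⊆ t) : barrierCone t ⊆ barrierCone s :=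
  fun _ hu => hu.mono (Set.image_mono h)

lemma barrierCone_add_subset_left {s t : Set H} (ht : t.Nonempty) :
    barrierCone (s + t) ⊆ barrierCone s := by
  intro u hu
  obtain ⟨y, hy⟩ := ht
  obtain ⟨M, hM⟩ := mem_barrierCone_iff.1 hu
  refine mem_barrierCone_iff.2 ⟨M - ⟪y, u⟫_ℝ, fun x hx => ?_⟩
  have := hM _ (Set.add_mem_add hx hy)
  rw [inner_add_left] at this
  linarith

lemma barrierCone_sub_subset_left {s t : Set H} (ht : t.Nonempty) :
    barrierCone (s - t) ⊆ barrierCone s := by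
  intro u hu
  obtain ⟨y, hy⟩ := ht
  obtain ⟨M, hM⟩ := mem_barrierCone_iff.1 hu
  refine mem_barrierCone_iff.2 ⟨M + ⟪y, u⟫_ℝ, fun x hx => ?_⟩
  have := hM _ (Set.sub_mem_sub hx hy)
  rw [inner_sub_left] at this
  linarith

lemma neg_mem_barrierCone_of_mem_sub {s t : Set H} (hs : s.Nonempty) {u : H}
    (hu : u ∈ barrierCone (s - t)) : -u ∈ barrierCone t := by
  obtain ⟨x, hx⟩ := hs
  obtain ⟨M, hM⟩ := mem_barrierCone_iff.1 hu
  refine mem_barrierCone_iff.2 ⟨M - ⟪x, u⟫_ℝ, fun y hy => ?_⟩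
  have := hM _ (Set.sub_mem_sub hx hy)
  rw [inner_sub_left] at this
  rw [inner_neg_right]
  linarith

lemma recCone_subset_recCone_closure {E : Type*} [NormedAddCommGroup E] (s : Set E) :
    recCone s ⊆ recCone (closure s) :=
  fun _ hu _ hy => map_mem_closure (continuous_const.add continuous_id) hy hu

lemma recCone_subset_recCone_add_left {E : Type*} [NormedAddCommGroup E] (s t : Set E) :
    recCone s ⊆ recCone (s + t) := by
  rintro u hu _ ⟨x, hx, y, hy, rfl⟩
  exact ⟨u + x, hu x hx, y, hy, add_assoc _ _ _⟩

lemma recCone_subset_recCone_add_right {E : Type*} [NormedAddCommGroup E] (s t : Set E) :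
    recCone t ⊆ recCone (s + t) := by
  rw [add_comm s t]
  exact recCone_subset_recCone_add_left t s

lemma recCone_subset_recCone_sub_left {E : Type*} [NormedAddCommGroup E] (s t : Set E) :
    recCone s ⊆ recCone (s - t) := by
  rintro u hu _ ⟨x, hx, y, hy, rfl⟩
  exact ⟨u + x, hu x hx, y, hy, add_sub_assoc _ _ _⟩

lemma neg_mem_recCone_sub {E : Type*} [NormedAddCommGroup E] {s t : Set E} {u : E}
    (hu : u ∈ recCone t) : -u ∈ recCone (s - t) := by
  rintro _ ⟨x, hx, y, hy, rfl⟩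
  exact ⟨x, hx, u + y, hu y hy, by beta_reduce; abel⟩

lemma polarCone_barrierCone_subset_recCone [CompleteSpace H] {K : Set H} (hKc : IsClosed K)
    (hK : Convex ℝ K) : polarCone (barrierCone K) ⊆ recCone K := by
  intro v hv c hc
  obtain ⟨p, hp, hmin⟩ :=
    exists_norm_eq_iInf_of_complete_convex ⟨c, hc⟩ hKc.isComplete hK (v + c)
  have hproj := (norm_eq_iInf_iff_real_inner_le_zero hK hp).1 hmin
  -- `q` is an outer normal of `K` at the projection `p` of `v + c`.
  set q := v + c - p
  have hq : q ∈ barrierCone K := mem_barrierCone_iff.2 ⟨⟪p, q⟫_ℝ, fun w hw => by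
    have := hproj w hw
    rw [real_inner_comm, inner_sub_left] at this
    linarith⟩
  have hcq : ⟪q, c - p⟫_ℝ ≤ 0 := hproj c hc
  have hvq : ⟪q, v⟫_ℝ ≤ 0 := hv q hq
  have hcp : c - p = q - v := by simp only [q]; abel
  rw [hcp, inner_sub_right, real_inner_self_eq_norm_sq, real_inner_comm] at hcq
  have hq0 : q = 0 := norm_eq_zero.1 (by nlinarith [norm_nonneg q, real_inner_comm v q])
  rwa [sub_eq_zero.1 hq0]

lemma IsMinNormPoint.norm_sq_le_inner {K : Set H} {v : H} (hv : IsMinNormPoint K v)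
    (hK : Convex ℝ K) {w : H} (hw : w ∈ K) : ‖v‖ ^ 2 ≤ ⟪w, v⟫_ℝ := by
  have : Nonempty K := ⟨⟨v, hv.1⟩⟩
  have hinf : ‖0 - v‖ = ⨅ w : K, ‖0 - (w : H)‖ := by
    refine le_antisymm (le_ciInf fun w => by simpa using hv.2 w w.2) ?_
    exact ciInf_le ⟨0, Set.forall_mem_range.2 fun _ => norm_nonneg _⟩ (⟨v, hv.1⟩ : K)
  have := (norm_eq_iInf_iff_real_inner_le_zero hK hv.1).1 hinf w hw
  rw [zero_sub, inner_neg_left, inner_sub_right, real_inner_self_eq_norm_sq,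
    real_inner_comm] at this
  linarith

lemma IsMinNormPoint.inner_eq_zero_of_mem_recCone {K : Set H} {v u : H}
    (hv : IsMinNormPoint K v) (hK : Convex ℝ K) (hu : u ∈ recCone K) (hnu : -u ∈ recCone K) :
    ⟪u, v⟫_ℝ = 0 := by
  have h₁ := hv.norm_sq_le_inner hK (hu v hv.1)
  have h₂ := hv.norm_sq_le_inner hK (hnu v hv.1)
  rw [inner_add_left, real_inner_self_eq_norm_sq] at h₁ h₂
  rw [inner_neg_left] at h₂
  linarith

lemma IsMinNormPoint.add_of_inner_eq_zero {K L : Set H} {v w : H} (hv : IsMinNormPoint K v)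
    (hw : IsMinNormPoint L w) (hK : Convex ℝ K) (hL : Convex ℝ L) (hvw : ⟪v, w⟫_ℝ = 0)
    (hmem : v + w ∈ K ∩ L) : IsMinNormPoint (K ∩ L) (v + w) := by
  refine ⟨hmem, fun x hx => ?_⟩
  have hsq : ‖v + w‖ ^ 2 ≤ ⟪x, v + w⟫_ℝ := by
    rw [norm_add_sq_real, hvw, inner_add_right]
    linarith [hv.norm_sq_le_inner hK hx.1, hw.norm_sq_le_inner hL hx.2]
  nlinarith [real_inner_le_norm x (v + w), norm_nonneg x, norm_nonneg (v + w)]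

lemma le_fconj (f : H → EReal) (x z : H) : ((⟪x, z⟫_ℝ : ℝ) : EReal) - f x ≤ fconj f z :=
  le_iSup (fun x => ((⟪x, z⟫_ℝ : ℝ) : EReal) - f x) x

lemma fconj_add_le (f : H → EReal) {u : H} {M : ℝ} (hM : ∀ x ∈ fdom f, ⟪x, u⟫_ℝ ≤ M) (z : H) :
    fconj f (z + u) ≤ fconj f z + M := by
  refine iSup_le fun x => ?_
  by_cases hx : x ∈ fdom f
  · calc ((⟪x, z + u⟫_ℝ : ℝ) : EReal) - f x = (((⟪x, z⟫_ℝ : ℝ) : EReal) - f x) + ⟪x, u⟫_ℝ := by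
          rw [inner_add_right, EReal.coe_add, sub_eq_add_neg, sub_eq_add_neg, add_right_comm]
      _ ≤ fconj f z + M := add_le_add (le_fconj f x z) (EReal.coe_le_coe_iff.2 (hM x hx))
  · rw [show f x = ⊤ from not_not.1 hx, EReal.sub_top]
    exact bot_le

lemma barrierCone_fdom_subset_recCone_fdom_fconj (f : H → EReal) :
    barrierCone (fdom f) ⊆ recCone (fdom (fconj f)) := by
  intro u hu z hz
  obtain ⟨M, hM⟩ := mem_barrierCone_iff.1 hu
  rw [add_comm]
  exact ((fconj_add_le f hM z).trans_lt (EReal.add_lt_top hz (EReal.coe_ne_top M))).ne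

lemma ConvexFn.convex_fdom {f : H → EReal} (hf : ConvexFn f) : Convex ℝ (fdom f) := by
  have : fdom f = Prod.fst '' {p : H × ℝ | f p.1 ≤ (p.2 : EReal)} := by
    ext x
    refine ⟨fun hx => ⟨(x, (f x).toReal), EReal.le_coe_toReal hx, rfl⟩, ?_⟩
    rintro ⟨p, hp, rfl⟩
    exact (hp.trans_lt (EReal.coe_lt_top _)).ne
  rw [this]
  exact hf.linear_image (LinearMap.fst ℝ H ℝ)

lemma convexFn_fconj (f : H → EReal) : ConvexFn (fconj f) := by
  have : {p : H × ℝ | fconj f p.1 ≤ (p.2 : EReal)} =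
      ⋂ x, {p : H × ℝ | ((⟪x, p.1⟫_ℝ : ℝ) : EReal) - f x ≤ p.2} := by
    ext p
    simp only [fconj, iSup_le_iff, Set.mem_iInter, Set.mem_ofPred_eq]
  rw [ConvexFn, this]
  refine convex_iInter fun x => ?_
  induction f x using EReal.rec with
  | bot => simpa using convex_empty
  | top => simpa using convex_univ
  | coe a =>
    simp only [← EReal.coe_sub, EReal.coe_le_coe_iff]
    intro p hp q hq α β hα hβ hαβ
    simp only [Set.mem_ofPred_eq, Prod.fst_add, Prod.snd_add, Prod.smul_fst, Prod.smul_snd,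
      smul_eq_mul, inner_add_right, real_inner_smul_right] at hp hq ⊢
    have ha : a = α * a + β * a := by rw [← add_mul, hαβ, one_mul]
    nlinarith [mul_le_mul_of_nonneg_left hp hα, mul_le_mul_of_nonneg_left hq hβ]

lemma fconj_fconj_le {f : H → EReal} (hf : ∀ x, f x ≠ ⊥) (x : H) : fconj (fconj f) x ≤ f x := by
  refine iSup_le fun z => ?_
  by_cases hx : f x = ⊤
  · rw [hx]; exact le_top
  · obtain ⟨r, hr⟩ : ∃ r : ℝ, f x = r := ⟨(f x).toReal, (EReal.coe_toReal hx (hf x)).symm⟩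
    have h := le_fconj f x z
    rw [hr, ← EReal.coe_sub] at h
    calc ((⟪z, x⟫_ℝ : ℝ) : EReal) - fconj f z
        ≤ ((⟪z, x⟫_ℝ : ℝ) : EReal) - ((⟪x, z⟫_ℝ - r : ℝ) : EReal) := EReal.sub_le_sub le_rfl h
      _ = f x := by rw [← EReal.coe_sub, real_inner_comm, sub_sub_cancel, hr]

lemma isClosed_epigraph_real {α : Type*} [TopologicalSpace α] {f : α → EReal}
    (hf : LowerSemicontinuous f) : IsClosed {p : α × ℝ | f p.1 ≤ (p.2 : EReal)} :=
  hf.isClosed_epigraph.preimage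
    (continuous_fst.prodMk (continuous_coe_real_ereal.comp continuous_snd))

lemma exists_separation_of_not_le [CompleteSpace H] {f : H → EReal}
    (hlsc : LowerSemicontinuous f) (hcvx : ConvexFn f) {x₀ : H} {r₀ : ℝ} (h : ¬ f x₀ ≤ r₀) :
    ∃ (z : H) (s c : ℝ), (∀ (x : H) (r : ℝ), f x ≤ r → ⟪x, z⟫_ℝ + s * r < c) ∧
      c < ⟪x₀, z⟫_ℝ + s * r₀ := by
  obtain ⟨φ, c, hsep, hx₀⟩ :=
    geometric_hahn_banach_closed_point hcvx (isClosed_epigraph_real hlsc)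
      (show (x₀, r₀) ∉ _ from h)
  set z := (InnerProductSpace.toDual ℝ H).symm (φ.comp (ContinuousLinearMap.inl ℝ H ℝ))
  have hφ : ∀ x r, φ (x, r) = ⟪x, z⟫_ℝ + φ (0, 1) * r := by
    intro x r
    have hx : ⟪x, z⟫_ℝ = φ (x, 0) := by
      rw [real_inner_comm, InnerProductSpace.toDual_symm_apply]; rfl
    have hxr : (x, r) = (x, (0 : ℝ)) + r • ((0 : H), (1 : ℝ)) := by simp
    rw [hx, hxr, map_add, map_smul, smul_eq_mul, mul_comm]
  refine ⟨z, φ (0, 1), c, fun x r hxr => ?_, ?_⟩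
  · have := hsep (x, r) hxr
    rwa [hφ] at this
  · rwa [hφ] at hx₀

-- The hyperplane separating `(x₀, r₀)` from the epigraph is either non-vertical
-- (normalised to slope `-1`) or vertical.
lemma exists_fconj_le_or_separated [CompleteSpace H] {f : H → EReal} (hf : ProperFn f)
    (hlsc : LowerSemicontinuous f) (hcvx : ConvexFn f) {x₀ : H} {r₀ : ℝ} (h : ¬ f x₀ ≤ r₀) :
    (∃ z, fconj f z ≤ ((⟪x₀, z⟫_ℝ - r₀ : ℝ) : EReal)) ∨
      ∃ (z : H) (c : ℝ), (∀ x ∈ fdom f, ⟪x, z⟫_ℝ ≤ c) ∧ c < ⟪x₀, z⟫_ℝ := by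
  obtain ⟨z, s, c, hsep, hx₀⟩ := exists_separation_of_not_le hlsc hcvx h
  obtain ⟨x₁, hx₁⟩ := hf.2
  have hs : s ≤ 0 := by
    by_contra! hs
    set t := max (f x₁).toReal ((c - ⟪x₁, z⟫_ℝ) / s)
    have h₁ := hsep x₁ t
      ((EReal.le_coe_toReal hx₁).trans (EReal.coe_le_coe_iff.2 (le_max_left _ _)))
    have h₂ := (div_le_iff₀ hs).1 (le_max_right (f x₁).toReal ((c - ⟪x₁, z⟫_ℝ) / s))
    linarith
  rcases hs.lt_or_eq with hs | rfl
  · refine Or.inl ⟨(-s)⁻¹ • z, iSup_le fun x => ?_⟩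
    by_cases hx : f x = ⊤
    · rw [hx, EReal.sub_top]; exact bot_le
    · have hfx : f x = ((f x).toReal : EReal) := (EReal.coe_toReal hx (hf.1 x)).symm
      have key := (hsep x _ hfx.le).trans hx₀
      rw [hfx, ← EReal.coe_sub, EReal.coe_le_coe_iff, real_inner_smul_right,
        real_inner_smul_right]
      have hinv : (-s)⁻¹ * s = -1 := by field_simp [hs.ne]
      have hscale := mul_lt_mul_of_pos_left key (inv_pos.2 (neg_pos.2 hs))
      rw [mul_add, mul_add, ← mul_assoc, ← mul_assoc, hinv] at hscale
      linarith
  · exact Or.inr ⟨z, c, fun x hx => by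
      simpa using (hsep x _ (EReal.le_coe_toReal hx)).le, by simpa using hx₀⟩

lemma fdom_fconj_nonempty [CompleteSpace H] {f : H → EReal} (hf : ProperFn f)
    (hlsc : LowerSemicontinuous f) (hcvx : ConvexFn f) : (fdom (fconj f)).Nonempty := by
  obtain ⟨x₀, hx₀⟩ := hf.2
  have h : ¬ f x₀ ≤ (((f x₀).toReal - 1 : ℝ) : EReal) := by
    rw [← EReal.coe_toReal hx₀ (hf.1 x₀), EReal.coe_le_coe_iff, EReal.toReal_coe]
    linarith
  rcases exists_fconj_le_or_separated hf hlsc hcvx h with ⟨z, hz⟩ | ⟨z, c, hbdd, hc⟩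
  · exact ⟨z, (hz.trans_lt (EReal.coe_lt_top _)).ne⟩
  · exact absurd (hbdd x₀ hx₀) (not_le.2 hc)

lemma coe_sub_le_fconj_fconj {f : H → EReal} {z : H} {b : ℝ} (hz : fconj f z ≤ b) (x : H) :
    ((⟪z, x⟫_ℝ - b : ℝ) : EReal) ≤ fconj (fconj f) x := by
  rw [EReal.coe_sub]
  exact (EReal.sub_le_sub le_rfl hz).trans (le_fconj (fconj f) z x)

lemma fconj_fconj_eq_top_of_separated {f : H → EReal} (hne : (fdom (fconj f)).Nonempty)
    {x₀ z : H} {c : ℝ} (hbdd : ∀ x ∈ fdom f, ⟪x, z⟫_ℝ ≤ c) (hc : c < ⟪x₀, z⟫_ℝ) :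
    fconj (fconj f) x₀ = ⊤ := by
  obtain ⟨z₀, hz₀⟩ := hne
  set b := (fconj f z₀).toReal
  refine (EReal.eq_top_iff_forall_lt _).2 fun r => ?_
  set t := (|r + 1 - (⟪z₀, x₀⟫_ℝ - b)|) / (⟪x₀, z⟫_ℝ - c)
  have ht : 0 ≤ t := div_nonneg (abs_nonneg _) (by linarith)
  have hbdd' : ∀ x ∈ fdom f, ⟪x, t • z⟫_ℝ ≤ t * c := fun x hx => by
    rw [real_inner_smul_right]; exact mul_le_mul_of_nonneg_left (hbdd x hx) ht
  have hconj : fconj f (z₀ + t • z) ≤ ((b + t * c : ℝ) : EReal) :=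
    (fconj_add_le f hbdd' z₀).trans
      (by rw [EReal.coe_add]; gcongr; exact EReal.le_coe_toReal hz₀)
  refine lt_of_lt_of_le ?_ (coe_sub_le_fconj_fconj hconj x₀)
  have htδ : t * (⟪x₀, z⟫_ℝ - c) = |r + 1 - (⟪z₀, x₀⟫_ℝ - b)| :=
    div_mul_cancel₀ _ (by linarith)
  rw [EReal.coe_lt_coe_iff, inner_add_left, real_inner_smul_left, real_inner_comm x₀ z]
  linarith [le_abs_self (r + 1 - (⟪z₀, x₀⟫_ℝ - b))]

lemma le_fconj_fconj [CompleteSpace H] {f : H → EReal} (hf : ProperFn f)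
    (hlsc : LowerSemicontinuous f) (hcvx : ConvexFn f) (x₀ : H) : f x₀ ≤ fconj (fconj f) x₀ := by
  refine EReal.ge_of_forall_gt_iff_ge.1 fun r hr => ?_
  rcases exists_fconj_le_or_separated hf hlsc hcvx (not_le.2 hr) with
    ⟨z, hz⟩ | ⟨z, c, hbdd, hc⟩
  · simpa [real_inner_comm] using coe_sub_le_fconj_fconj hz x₀
  · rw [fconj_fconj_eq_top_of_separated (fdom_fconj_nonempty hf hlsc hcvx) hbdd hc]
    exact le_top

theorem fconj_fconj [CompleteSpace H] {f : H → EReal} (hf : ProperFn f)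
    (hlsc : LowerSemicontinuous f) (hcvx : ConvexFn f) : fconj (fconj f) = f :=
  funext fun x => le_antisymm (fconj_fconj_le hf.1 x) (le_fconj_fconj hf hlsc hcvx x)

lemma barrierCone_fdom_fconj_subset_recCone_fdom [CompleteSpace H] {f : H → EReal}
    (hf : ProperFn f) (hlsc : LowerSemicontinuous f) (hcvx : ConvexFn f) :
    barrierCone (fdom (fconj f)) ⊆ recCone (fdom f) := by
  simpa only [fconj_fconj hf hlsc hcvx] using barrierCone_fdom_subset_recCone_fdom_fconj (fconj f)

lemma barrierCone_closure_fdom_sub_subset_recCone {f g : H → EReal} (hf : (fdom f).Nonempty)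
    (hg : (fdom g).Nonempty) {u : H} (hu : u ∈ barrierCone (closure (fdom f - fdom g))) :
    u ∈ recCone (closure (fdom (fconj f) + fdom (fconj g))) ∧
      -u ∈ recCone (closure (fdom (fconj f) + fdom (fconj g))) := by
  have hu' := barrierCone_anti subset_closure hu
  have huf := barrierCone_sub_subset_left hg hu'
  have hug := neg_mem_barrierCone_of_mem_sub hf hu'
  exact ⟨recCone_subset_recCone_closure _ (recCone_subset_recCone_add_left _ _
      (barrierCone_fdom_subset_recCone_fdom_fconj f huf)),
    recCone_subset_recCone_closure _ (recCone_subset_recCone_add_right _ _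
      (barrierCone_fdom_subset_recCone_fdom_fconj g hug))⟩

lemma barrierCone_closure_fdom_fconj_add_subset_recCone [CompleteSpace H] {f g : H → EReal}
    (hf : ProperFn f) (hf_lsc : LowerSemicontinuous f) (hf_cvx : ConvexFn f)
    (hg : ProperFn g) (hg_lsc : LowerSemicontinuous g) (hg_cvx : ConvexFn g) {u : H}
    (hu : u ∈ barrierCone (closure (fdom (fconj f) + fdom (fconj g)))) :
    u ∈ recCone (closure (fdom f - fdom g)) ∧ -u ∈ recCone (closure (fdom f - fdom g)) := by
  have hu' := barrierCone_anti subset_closure hu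
  have huf := barrierCone_add_subset_left (fdom_fconj_nonempty hg hg_lsc hg_cvx) hu'
  rw [add_comm] at hu'
  have hug := barrierCone_add_subset_left (fdom_fconj_nonempty hf hf_lsc hf_cvx) hu'
  exact ⟨recCone_subset_recCone_closure _ (recCone_subset_recCone_sub_left _ _
      (barrierCone_fdom_fconj_subset_recCone_fdom hf hf_lsc hf_cvx huf)),
    recCone_subset_recCone_closure _ (neg_mem_recCone_sub
      (barrierCone_fdom_fconj_subset_recCone_fdom hg hg_lsc hg_cvx hug))⟩

theorem minimal_displacement_eq_vP_add_vD {H : Type*} [NormedAddCommGroup H] [InnerProductSpace ℝ H]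
    [FiniteDimensional ℝ H]
    (f g : H → EReal)
    (hf_prop : ProperFn f) (hf_lsc : LowerSemicontinuous f) (hf_cvx : ConvexFn f)
    (hg_prop : ProperFn g) (hg_lsc : LowerSemicontinuous g) (hg_cvx : ConvexFn g)
    (vP : H) (hvP : IsMinNormPoint (closure (fdom f - fdom g)) vP)
    (vD : H) (hvD : IsMinNormPoint (closure (fdom (fconj f) + fdom (fconj g))) vD)
    : IsMinNormPoint (closure (fdom f - fdom g) ∩ closure (fdom (fconj f) + fdom (fconj g)))
      (vP + vD) := by
  have hC : Convex ℝ (closure (fdom f - fdom g)) :=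
    (hf_cvx.convex_fdom.sub hg_cvx.convex_fdom).closure
  have hD : Convex ℝ (closure (fdom (fconj f) + fdom (fconj g))) :=
    ((convexFn_fconj f).convex_fdom.add (convexFn_fconj g).convex_fdom).closure
  have hvD_perp : ∀ u ∈ barrierCone (closure (fdom f - fdom g)), ⟪u, vD⟫_ℝ = 0 := fun u hu =>
    have h := barrierCone_closure_fdom_sub_subset_recCone hf_prop.2 hg_prop.2 hu
    hvD.inner_eq_zero_of_mem_recCone hD h.1 h.2
  have hvP_perp : ∀ u ∈ barrierCone (closure (fdom (fconj f) + fdom (fconj g))),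
      ⟪u, vP⟫_ℝ = 0 := fun u hu =>
    have h := barrierCone_closure_fdom_fconj_add_subset_recCone hf_prop hf_lsc hf_cvx hg_prop
      hg_lsc hg_cvx hu
    hvP.inner_eq_zero_of_mem_recCone hC h.1 h.2
  have hvD_rec := polarCone_barrierCone_subset_recCone isClosed_closure hC
    fun u hu => (hvD_perp u hu).le
  have hvP_rec := polarCone_barrierCone_subset_recCone isClosed_closure hD
    fun u hu => (hvP_perp u hu).le
  have hvP_barrier : -vP ∈ barrierCone (closure (fdom f - fdom g)) :=
    mem_barrierCone_iff.2 ⟨-‖vP‖ ^ 2, fun w hw => by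
      rw [inner_neg_right]; linarith [hvP.norm_sq_le_inner hC hw]⟩
  have horth : ⟪vP, vD⟫_ℝ = 0 := by simpa [inner_neg_left] using hvD_perp _ hvP_barrier
  refine hvP.add_of_inner_eq_zero hvD hC hD horth ⟨?_, hvP_rec vD hvD.1⟩
  rw [add_comm]
  exact hvD_rec vP hvP.1
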